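/- arXiv:2304.00826 — 2 statements merged into one kernel-verified Lean document; each statement's English description precedes it below -/
import Mathlib

section
/- Let σ ≥ 2 and let U₁, U₂ : ℝ → ℝ be two traveling fronts with speed σ for the F/KPP reaction term f(u) = u(1-u), i.e., twice continuously differentiable nonnegative functions satisfying Uᵢ'' + σ Uᵢ' + Uᵢ(1 - Uᵢ) = 0 with Uᵢ(-∞) = 1 and Uᵢ(+∞) = 0. Then each Uᵢ is strictly decreasing, and there exists h ∈ ℝ such that U₂(x) = U₁(x + h) for all x ∈ ℝ. In particular there is a unique such front normalized by U(0) = 1/2. -/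
/-!
By the maximum principle a front takes values in `[0, 1]`, and in fact in `(0, 1)`: the
constant states `0` and `1` solve the equation, and a solution of this second-order equation is
determined by its value and slope at one point. Since `(e^{σx} U')' = -e^{σx} U (1 - U) < 0`, a
front is strictly decreasing. For `σ ≥ 0` the ratio `g = (1 - U) / (-U')` satisfies
`g' ≥ 1 - g²`, and a positive solution of this Riccati inequality on a left half-line must have
`g ≥ 1`; that is, `|U'| ≤ 1 - U`.

Two fronts are then compared along their level sets: if `U₂ (θ x) = U₁ x`, the slope mismatch
`Q = U₂' ∘ θ - U₁'` solves `Q' = U₁ (1 - U₁) / U₂'(θ) · Q`, whose coefficient is at most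
`-U₁`. As `x → -∞` a nonzero `Q` would therefore grow exponentially, which the slope bound forbids.
Hence two fronts with a common value have a common slope there, and by uniqueness for the
ODE they are translates of each other.
-/

open Filter Topology

/-- A traveling front with speed `σ` for the F/KPP reaction term `f u = u * (1 - u)`:
a twice continuously differentiable nonnegative function solving
`U'' + σ U' + U (1 - U) = 0` with `U (-∞) = 1` and `U (+∞) = 0`. -/
def IsKPPFront (σ : ℝ) (U : ℝ → ℝ) : Prop :=
  ContDiff ℝ 2 U ∧
  (∀ x : ℝ, 0 ≤ U x) ∧
  (∀ x : ℝ, deriv (deriv U) x + σ * deriv U x + U x * (1 - U x) = 0) ∧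
  Tendsto U atBot (𝓝 1) ∧
  Tendsto U atTop (𝓝 0)

open Set Function
open scoped NNReal

theorem IsLocalMax.deriv_deriv_nonpos {f : ℝ → ℝ} {x : ℝ} (h : IsLocalMax f x)
    (hf : ContinuousAt f x) : deriv (deriv f) x ≤ 0 := by
  by_contra! hpos
  have hconst : f =ᶠ[𝓝 x] fun _ => f x :=
    ((isLocalMin_of_deriv_deriv_pos hpos h.deriv_eq_zero hf).and h).mono
      fun y hy => le_antisymm hy.2 hy.1
  have : deriv (deriv f) x = 0 := by
    rw [hconst.deriv.deriv_eq, deriv_const']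
    simp
  exact hpos.ne' this

theorem damped_ODE_solution_unique {f : ℝ → ℝ} {s : Set ℝ} {K : ℝ≥0} (σ : ℝ)
    (hf : LipschitzOnWith K f s) {U V : ℝ → ℝ}
    (hU : Differentiable ℝ U) (hU' : Differentiable ℝ (deriv U)) (hUs : ∀ x, U x ∈ s)
    (hUode : ∀ x, deriv (deriv U) x + σ * deriv U x + f (U x) = 0)
    (hV : Differentiable ℝ V) (hV' : Differentiable ℝ (deriv V)) (hVs : ∀ x, V x ∈ s)
    (hVode : ∀ x, deriv (deriv V) x + σ * deriv V x + f (V x) = 0)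
    {x₀ : ℝ} (h₀ : U x₀ = V x₀) (h₀' : deriv U x₀ = deriv V x₀) : U = V := by
  set v : ℝ × ℝ → ℝ × ℝ := fun w => (w.2, -(σ * w.2) - f w.1)
  have hv : LipschitzOnWith (1 + ‖σ‖₊ + K) v (s ×ˢ univ) := by
    refine LipschitzOnWith.of_dist_le_mul fun w hw w' hw' => ?_
    have hf₁ : dist (f w.1) (f w'.1) ≤ K * dist w w' :=
      (hf.dist_le_mul w.1 hw.1 w'.1 hw'.1).trans
        (mul_le_mul_of_nonneg_left (Prod.dist_eq (x := w) (y := w') ▸ le_max_left _ _) K.2)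
    have h₂ : dist w.2 w'.2 ≤ dist w w' := Prod.dist_eq (x := w) (y := w') ▸ le_max_right _ _
    have hσ₂ : |σ| * dist w.2 w'.2 ≤ |σ| * dist w w' :=
      mul_le_mul_of_nonneg_left h₂ (abs_nonneg σ)
    simp only [Real.dist_eq] at hf₁ h₂ hσ₂
    rw [Prod.dist_eq, max_le_iff, Real.dist_eq, Real.dist_eq]
    simp only [NNReal.coe_add, NNReal.coe_one, coe_nnnorm, Real.norm_eq_abs]
    have hd := dist_nonneg (x := w) (y := w')
    constructor
    · nlinarith [abs_nonneg σ, K.2]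
    · calc |-(σ * w.2) - f w.1 - (-(σ * w'.2) - f w'.1)|
          = |-(σ * (w.2 - w'.2)) - (f w.1 - f w'.1)| := by ring_nf
        _ ≤ |σ| * |w.2 - w'.2| + |f w.1 - f w'.1| := by
          refine (abs_sub _ _).trans ?_
          rw [abs_neg, abs_mul]
        _ ≤ (1 + |σ| + K) * dist w w' := by nlinarith
  have phase : ∀ W : ℝ → ℝ, Differentiable ℝ W → Differentiable ℝ (deriv W) →
      (∀ x, W x ∈ s) → (∀ x, deriv (deriv W) x + σ * deriv W x + f (W x) = 0) →
      ∀ t, HasDerivAt (fun x => (W x, deriv W x)) (v (W t, deriv W t)) t ∧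
        (W t, deriv W t) ∈ s ×ˢ univ := by
    intro W hW hW' hWs hWode t
    refine ⟨?_, hWs t, mem_univ _⟩
    have h2 : deriv (deriv W) t = -(σ * deriv W t) - f (W t) := by linarith [hWode t]
    simpa [v, h2] using (hW t).hasDerivAt.prodMk (hW' t).hasDerivAt
  have := ODE_solution_unique_univ (fun _ => hv) (phase U hU hU' hUs hUode)
    (phase V hV hV' hVs hVode) (Prod.ext h₀ h₀')
  exact funext fun x => congrArg Prod.fst (congrFun this x)

theorem StrictAnti.hasDerivAt_invFun {U : ℝ → ℝ} (hU : StrictAnti U) {x U' : ℝ}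
    (hd : HasDerivAt U U' x) (hU' : U' ≠ 0) (hrange : range U ∈ 𝓝 (U x)) :
    HasDerivAt (invFun U) U'⁻¹ (U x) := by
  have hleft : LeftInverse (invFun U) U := leftInverse_invFun hU.injective
  have hright : ∀ y ∈ range U, U (invFun U y) = y := fun y hy => invFun_eq hy
  have hcont : ContinuousAt (invFun U) (U x) := by
    have hmono : MonotoneOn (fun y => -invFun U y) (range U) := by
      rintro _ ⟨a, rfl⟩ _ ⟨b, rfl⟩ hab
      simpa [hleft a, hleft b] using hU.le_iff_ge.1 hab
    have himage : (fun y => -invFun U y) '' range U = univ :=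
      eq_univ_of_forall fun t => ⟨U (-t), mem_range_self _, by simp [hleft (-t)]⟩
    have := continuousAt_of_monotoneOn_of_image_mem_nhds hmono hrange
      (by rw [himage]; exact univ_mem)
    convert this.neg using 1
    ext y
    simp
  refine HasDerivAt.of_local_left_inverse hcont (by rwa [hleft x]) hU' ?_
  filter_upwards [hrange] with y hy using hright y hy

theorem one_le_of_deriv_le_sq_sub_one {φ φ' : ℝ → ℝ}
    (hφ : ∀ s, 0 ≤ s → HasDerivAt φ (φ' s) s) (hpos : ∀ s, 0 ≤ s → 0 < φ s)
    (hle : ∀ s, 0 ≤ s → φ' s ≤ φ s ^ 2 - 1) : 1 ≤ φ 0 := by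
  by_contra! h1
  set κ := (1 - φ 0 ^ 2) / 2
  have hφ0 := hpos 0 le_rfl
  have hκ : 0 < κ := by simp only [κ]; nlinarith
  have fence : ∀ L, 0 ≤ L → φ L ≤ φ 0 - κ * L := fun L hL =>
    image_le_of_deriv_right_lt_deriv_boundary (a := 0) (b := L)
      (HasDerivAt.continuousOn fun s hs => hφ s hs.1)
      (fun s hs => (hφ s hs.1).hasDerivWithinAt)
      (B := fun s => φ 0 - κ * s) (B' := fun _ => -κ) (by simp)
      (fun s => by simpa using ((hasDerivAt_id s).const_mul κ).const_sub (φ 0))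
      (fun s hs hφs => by
        have h0 := hpos s hs.1
        have hsq : φ s ^ 2 ≤ φ 0 ^ 2 := by
          have : φ s ≤ φ 0 := by nlinarith [hs.1]
          nlinarith
        linarith [hle s hs.1, show φ 0 ^ 2 - 1 = -2 * κ by simp only [κ]; ring])
      ⟨hL, le_rfl⟩
  have hL : 0 ≤ φ 0 / κ := (div_pos hφ0 hκ).le
  have := fence _ hL
  rw [mul_div_cancel₀ _ hκ.ne'] at this
  linarith [hpos _ hL]

theorem nonpos_of_bddAbove_of_deriv_le_neg_mul_self {h h' : ℝ → ℝ} {a c : ℝ} (hc : 0 < c)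
    (hh : ∀ t ≤ a, HasDerivAt h (h' t) t) (hle : ∀ t ≤ a, h' t ≤ -(c * h t))
    (hbdd : BddAbove (h '' Iic a)) : h a ≤ 0 := by
  by_contra! ha
  obtain ⟨M, hM⟩ := bddAbove_def.1 hbdd
  replace hM : ∀ t ≤ a, h t ≤ M := fun t ht => hM _ (mem_image_of_mem h ht)
  have hexp : AntitoneOn (fun t => Real.exp (c * t) * h t) (Iic a) := by
    have hd : ∀ t ≤ a, HasDerivAt (fun t => Real.exp (c * t) * h t)
        (Real.exp (c * t) * (c * h t + h' t)) t := fun t ht =>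
      ((((hasDerivAt_id' t).const_mul c).exp).fun_mul (hh t ht)).congr_deriv (by ring)
    refine antitoneOn_of_deriv_nonpos (convex_Iic a)
      (HasDerivAt.continuousOn fun t ht => hd t ht)
      (fun t ht => (hd t (interior_subset ht :)).differentiableAt.differentiableWithinAt)
      fun t ht => ?_
    rw [interior_Iic] at ht
    rw [(hd t ht.le).deriv]
    exact mul_nonpos_of_nonneg_of_nonpos (Real.exp_pos _).le (by linarith [hle t ht.le])
  set t := a - M / (c * h a)
  have hMa : h a ≤ M := hM a le_rfl
  have ht : t ≤ a := by
    have : 0 ≤ M / (c * h a) := div_nonneg (by linarith) (by positivity)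
    linarith
  have hgrow : Real.exp (c * (a - t)) * h a ≤ h t := by
    have := hexp ht self_mem_Iic ht
    rw [mul_sub, Real.exp_sub, div_mul_eq_mul_div, div_le_iff₀ (Real.exp_pos _)]
    linarith
  have hexp_ge := Real.add_one_le_exp (c * (a - t))
  have : c * (a - t) * h a = M := by
    simp only [t]; field_simp; ring
  nlinarith [hM t ht]

theorem lipschitzOnWith_mul_one_sub : LipschitzOnWith 1 (fun u : ℝ => u * (1 - u)) (Icc 0 1) := by
  refine LipschitzOnWith.of_dist_le_mul fun u hu v hv => ?_
  rw [Real.dist_eq, Real.dist_eq, NNReal.coe_one, one_mul,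
    show u * (1 - u) - v * (1 - v) = (u - v) * (1 - u - v) by ring, abs_mul]
  exact mul_le_of_le_one_right (abs_nonneg _)
    (abs_le.2 ⟨by linarith [hu.2, hv.2], by linarith [hu.1, hv.1]⟩)

namespace IsKPPFront

variable {σ : ℝ} {U : ℝ → ℝ}

theorem differentiable (hU : IsKPPFront σ U) : Differentiable ℝ U :=
  hU.1.differentiable (by norm_num)

theorem differentiable_deriv (hU : IsKPPFront σ U) : Differentiable ℝ (deriv U) :=
  (contDiff_succ_iff_deriv.1 (hU.1 : ContDiff ℝ (1 + 1) U)).2.2.differentiable one_ne_zero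

theorem deriv_deriv (hU : IsKPPFront σ U) (x : ℝ) :
    deriv (deriv U) x = -(σ * deriv U x) - U x * (1 - U x) := by
  linarith [hU.2.2.1 x]

theorem comp_add_const (hU : IsKPPFront σ U) (a : ℝ) : IsKPPFront σ fun x => U (x + a) := by
  have hd : deriv (fun x => U (x + a)) = fun x => deriv U (x + a) :=
    funext (deriv_comp_add_const U a)
  refine ⟨hU.1.comp (contDiff_id.add contDiff_const), fun x => hU.2.1 (x + a), fun x => ?_,
    hU.2.2.2.1.comp (tendsto_atBot_add_const_right _ a tendsto_id),
    hU.2.2.2.2.comp (tendsto_atTop_add_const_right _ a tendsto_id)⟩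
  rw [hd, deriv_comp_add_const (deriv U) a x]
  exact hU.2.2.1 (x + a)

theorem le_one (hU : IsKPPFront σ U) (x : ℝ) : U x ≤ 1 := by
  by_contra! hx
  obtain ⟨x₁, hx₁⟩ : ∃ x₁, ∀ y, U y ≤ U x₁ :=
    hU.differentiable.continuous.exists_forall_ge' x <| by
      rw [cocompact_eq_atBot_atTop, eventually_sup]
      exact ⟨(hU.2.2.2.1.eventually (gt_mem_nhds hx)).mono fun _ => le_of_lt,
        (hU.2.2.2.2.eventually (gt_mem_nhds (by linarith))).mono fun _ => le_of_lt⟩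
  have hmax : IsLocalMax U x₁ := Eventually.of_forall hx₁
  have h := hmax.deriv_deriv_nonpos hU.differentiable.continuous.continuousAt
  rw [hU.deriv_deriv, hmax.deriv_eq_zero] at h
  nlinarith [hx₁ x]

theorem eq_of_eq_of_deriv_eq (hU : IsKPPFront σ U) {V : ℝ → ℝ} (hV : Differentiable ℝ V)
    (hV' : Differentiable ℝ (deriv V)) (hVs : ∀ x, V x ∈ Icc 0 1)
    (hVode : ∀ x, deriv (deriv V) x + σ * deriv V x + V x * (1 - V x) = 0) {x : ℝ}
    (h₀ : U x = V x) (h₀' : deriv U x = deriv V x) : U = V :=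
  damped_ODE_solution_unique σ lipschitzOnWith_mul_one_sub hU.differentiable
    hU.differentiable_deriv (fun y => ⟨hU.2.1 y, hU.le_one y⟩) hU.2.2.1 hV hV' hVs hVode h₀ h₀'

theorem eq_const_of_deriv_eq_zero (hU : IsKPPFront σ U) {x c : ℝ} (hc : c * (1 - c) = 0)
    (hx : U x = c) (hx' : deriv U x = 0) : U = fun _ => c :=
  hU.eq_of_eq_of_deriv_eq (differentiable_const c) (by simp)
    (fun _ => hx ▸ ⟨hU.2.1 x, hU.le_one x⟩) (by simpa using hc) hx (by simpa using hx')

theorem lt_one (hU : IsKPPFront σ U) (x : ℝ) : U x < 1 := by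
  refine (hU.le_one x).lt_of_ne fun hx => ?_
  have hmax : IsLocalMax U x := Eventually.of_forall fun y => hx ▸ hU.le_one y
  have h := hU.2.2.2.2
  rw [hU.eq_const_of_deriv_eq_zero (by norm_num) hx hmax.deriv_eq_zero] at h
  exact one_ne_zero (tendsto_nhds_unique tendsto_const_nhds h)

theorem pos (hU : IsKPPFront σ U) (x : ℝ) : 0 < U x := by
  refine (hU.2.1 x).lt_of_ne fun hx => ?_
  have hmin : IsLocalMin U x := Eventually.of_forall fun y => hx ▸ hU.2.1 y
  have h := hU.2.2.2.1
  rw [hU.eq_const_of_deriv_eq_zero (by norm_num) hx.symm hmin.deriv_eq_zero] at h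
  exact one_ne_zero (tendsto_nhds_unique h tendsto_const_nhds)

theorem strictAnti_exp_mul_deriv (hU : IsKPPFront σ U) :
    StrictAnti fun x => Real.exp (σ * x) * deriv U x := by
  refine strictAnti_of_hasDerivAt_neg
    (f' := fun x => -(Real.exp (σ * x) * (U x * (1 - U x))))
    (fun x => ((((hasDerivAt_id' x).const_mul σ).exp).fun_mul
      (hU.differentiable_deriv x).hasDerivAt).congr_deriv (by rw [hU.deriv_deriv]; ring))
    fun x => ?_
  have := mul_pos (hU.pos x) (sub_pos.2 (hU.lt_one x))
  have := Real.exp_pos (σ * x)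
  simp only [neg_lt_zero]
  positivity

theorem deriv_neg (hU : IsKPPFront σ U) (x : ℝ) : deriv U x < 0 := by
  by_contra! hx
  have hpos : ∀ y < x, 0 < deriv U y := fun y hy =>
    pos_of_mul_pos_right ((mul_nonneg (Real.exp_pos _).le hx).trans_lt
      (hU.strictAnti_exp_mul_deriv hy)) (Real.exp_pos _).le
  have hmono : MonotoneOn U (Iic x) :=
    monotoneOn_of_deriv_nonneg (convex_Iic x) hU.differentiable.continuous.continuousOn
      hU.differentiable.differentiableOn fun y hy => (hpos y (by simpa using hy)).le
  have h1 : 1 ≤ U x := le_of_tendsto hU.2.2.2.1 <|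
    (eventually_le_atBot x).mono fun y hy => hmono hy self_mem_Iic hy
  exact (hU.lt_one x).not_ge h1

theorem strictAnti (hU : IsKPPFront σ U) : StrictAnti U :=
  strictAnti_of_deriv_neg hU.deriv_neg

theorem range_eq (hU : IsKPPFront σ U) : range U = Ioo 0 1 := by
  refine Subset.antisymm (range_subset_iff.2 fun x => ⟨hU.pos x, hU.lt_one x⟩) fun u hu => ?_
  exact mem_range_of_exists_le_of_exists_ge hU.differentiable.continuous
    ((hU.2.2.2.2.eventually (gt_mem_nhds hu.1)).exists.imp fun _ => le_of_lt)
    ((hU.2.2.2.1.eventually (lt_mem_nhds hu.2)).exists.imp fun _ => le_of_lt)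

theorem neg_deriv_le_one_sub (hσ : 0 ≤ σ) (hU : IsKPPFront σ U) (x : ℝ) :
    -deriv U x ≤ 1 - U x := by
  have hv : ∀ t, 0 < -deriv U t := fun t => neg_pos.2 (hU.deriv_neg t)
  have hz : ∀ t, 0 < 1 - U t := fun t => sub_pos.2 (hU.lt_one t)
  set g : ℝ → ℝ := fun t => (1 - U t) / -deriv U t
  have hg : ∀ t, HasDerivAt g
      ((deriv U t ^ 2 + (1 - U t) * deriv (deriv U) t) / deriv U t ^ 2) t := fun t =>
    (((hU.differentiable t).hasDerivAt.const_sub 1).div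
      (hU.differentiable_deriv t).hasDerivAt.fun_neg (hv t).ne').congr_deriv (by ring)
  have key := one_le_of_deriv_le_sq_sub_one (φ := fun s => g (x - s))
    (fun s _ => (hg (x - s)).comp_const_sub x s) (fun s _ => div_pos (hz _) (hv _))
    fun s _ => by
      set t := x - s
      have hd : deriv U t ≠ 0 := (hU.deriv_neg t).ne
      rw [← sub_nonneg, div_pow, neg_sq, hU.deriv_deriv,
        show ((1 - U t) ^ 2 / deriv U t ^ 2 - 1 - -((deriv U t ^ 2 + (1 - U t) *
          (-(σ * deriv U t) - U t * (1 - U t))) / deriv U t ^ 2)) =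
          (1 - U t) * (σ * -deriv U t + (1 - U t) ^ 2) / deriv U t ^ 2 by field_simp; ring]
      exact div_nonneg (mul_nonneg (hz t).le
        (add_nonneg (mul_nonneg hσ (hv t).le) (sq_nonneg _))) (sq_nonneg _)
  simpa [g, le_div_iff₀ (hv x)] using key

theorem deriv_eq_of_eq (hσ : 0 ≤ σ) {U₁ U₂ : ℝ → ℝ} (h₁ : IsKPPFront σ U₁)
    (h₂ : IsKPPFront σ U₂) {x : ℝ} (hx : U₁ x = U₂ x) : deriv U₁ x = deriv U₂ x := by
  set θ : ℝ → ℝ := fun t => invFun U₂ (U₁ t)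
  have hθ : ∀ t, U₂ (θ t) = U₁ t := fun t =>
    invFun_eq (h₂.range_eq ▸ ⟨h₁.pos t, h₁.lt_one t⟩ : U₁ t ∈ range U₂)
  have hθx : θ x = x := h₂.strictAnti.injective (by rw [hθ, hx])
  have hθd : ∀ t, HasDerivAt θ (deriv U₁ t / deriv U₂ (θ t)) t := fun t => by
    have hinv := h₂.strictAnti.hasDerivAt_invFun (h₂.differentiable (θ t)).hasDerivAt
      (h₂.deriv_neg _).ne (h₂.range_eq ▸ isOpen_Ioo.mem_nhds ⟨h₂.pos _, h₂.lt_one _⟩)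
    rw [hθ t] at hinv
    exact (hinv.comp t (h₁.differentiable t).hasDerivAt).congr_deriv (by ring)
  set Q : ℝ → ℝ := fun t => deriv U₂ (θ t) - deriv U₁ t
  have hQd : ∀ t, HasDerivAt Q (U₁ t * (1 - U₁ t) / deriv U₂ (θ t) * Q t) t := fun t => by
    have hne := (h₂.deriv_neg (θ t)).ne
    refine (((h₂.differentiable_deriv (θ t)).hasDerivAt.comp t (hθd t)).sub
      (h₁.differentiable_deriv t).hasDerivAt).congr_deriv ?_
    rw [h₂.deriv_deriv, h₁.deriv_deriv, hθ]
    field_simp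
    ring
  have hrate : ∀ t, U₁ t * (1 - U₁ t) / deriv U₂ (θ t) ≤ -U₁ t := fun t => by
    rw [div_le_iff_of_neg (h₂.deriv_neg _)]
    nlinarith [h₂.neg_deriv_le_one_sub hσ (θ t), hθ t, h₁.pos t]
  have hQx : Q x ^ 2 ≤ 0 := by
    refine nonpos_of_bddAbove_of_deriv_le_neg_mul_self (h := fun t => Q t ^ 2)
      (c := 2 * U₁ x) (by linarith [h₁.pos x]) (fun t _ => (hQd t).fun_pow 2) (fun t ht => ?_)
      ⟨1, forall_mem_image.2 fun t _ => ?_⟩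
    · have hU₁ : U₁ x ≤ U₁ t := h₁.strictAnti.antitone ht
      have := hrate t
      simp only [Nat.cast_ofNat, Nat.add_one_sub_one, pow_one]
      nlinarith [sq_nonneg (Q t)]
    · have h₁' := h₁.neg_deriv_le_one_sub hσ t
      have h₂' := h₂.neg_deriv_le_one_sub hσ (θ t)
      nlinarith [h₁.deriv_neg t, h₂.deriv_neg (θ t), h₁.pos t, h₂.pos (θ t)]
  have : Q x = 0 := pow_eq_zero_iff two_ne_zero |>.1 (le_antisymm hQx (sq_nonneg _))
  simp only [Q, hθx] at this
  linarith

theorem exists_translate (hσ : 0 ≤ σ) {U₁ U₂ : ℝ → ℝ} (h₁ : IsKPPFront σ U₁)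
    (h₂ : IsKPPFront σ U₂) : ∃ h : ℝ, ∀ x : ℝ, U₂ x = U₁ (x + h) := by
  obtain ⟨h, hh⟩ : U₂ 0 ∈ range U₁ := h₁.range_eq ▸ ⟨h₂.pos 0, h₂.lt_one 0⟩
  have hV := h₁.comp_add_const h
  have h₀ : U₂ 0 = U₁ (0 + h) := by rw [zero_add, hh]
  have hUV := h₂.eq_of_eq_of_deriv_eq hV.differentiable hV.differentiable_deriv
    (fun x => ⟨hV.2.1 x, hV.le_one x⟩) hV.2.2.1 h₀ (h₂.deriv_eq_of_eq hσ hV h₀)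
  exact ⟨h, congrFun hUV⟩

end IsKPPFront

/-- F/KPP fronts of a given speed `σ ≥ 2` are strictly decreasing and unique up to
translation; in particular there is a unique front normalized by `U 0 = 1/2`. -/
theorem fkpp_front_unique_up_to_translation (σ : ℝ) (hσ : 2 ≤ σ)
    (U₁ U₂ : ℝ → ℝ) (h₁ : IsKPPFront σ U₁) (h₂ : IsKPPFront σ U₂) :
    StrictAnti U₁ ∧ StrictAnti U₂ ∧
    (∃ h : ℝ, ∀ x : ℝ, U₂ x = U₁ (x + h)) ∧
    (∃! U : ℝ → ℝ, IsKPPFront σ U ∧ U 0 = 1/2) := by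
  have hσ₀ : 0 ≤ σ := by linarith
  refine ⟨h₁.strictAnti, h₂.strictAnti, h₁.exists_translate hσ₀ h₂, ?_⟩
  obtain ⟨x₀, hx₀⟩ : (1 / 2 : ℝ) ∈ range U₁ := h₁.range_eq ▸ ⟨by norm_num, by norm_num⟩
  refine ⟨fun x => U₁ (x + x₀), ⟨h₁.comp_add_const x₀, by simpa using hx₀⟩, ?_⟩
  rintro V ⟨hV, hV₀⟩
  obtain ⟨h, hh⟩ := h₁.exists_translate hσ₀ hV
  have : h = x₀ := h₁.strictAnti.injective (by rw [hx₀, ← hV₀, hh, zero_add])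
  exact funext fun x => by rw [hh, this]
end

section
/- Let a > 0, set λ = √(a/2) and σ = λ + 1/λ = √(a/2) + √(2/a). Then the function U(x) = 1/(1 + e^{λ x}) is twice continuously differentiable, strictly decreasing, takes values in (0,1), satisfies U(x) → 1 as x → -∞ and U(x) → 0 as x → +∞, and solves U''(x) + σ U'(x) + U(x)(1 - U(x))(1 + a U(x)) = 0 for all x ∈ ℝ. In particular, for a > 2 the minimal-speed front of the cubic equation can be computed explicitly. -/
open Filter Topology Real

/-!
Up to the reflection `x ↦ -x` and the scaling by `λ`, `U` is the logistic sigmoid `s`,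
`U x = s (-λ x)`. From the logistic equation `s' = s (1 - s)` one gets `U' = -λ U (1 - U)` and
`U'' = λ² U (1 - U) (1 - 2 U)`, so the left-hand side of the travelling-wave equation is
`U (1 - U) (λ² - σ λ + 1 + (a - 2 λ²) U)`. Both coefficients vanish because `a = 2 λ²` and
`σ λ = λ² + 1`.
-/

namespace Real

theorem hasDerivAt_sigmoid_const_mul (c x : ℝ) :
    HasDerivAt (fun y => sigmoid (c * y)) (c * (sigmoid (c * x) * (1 - sigmoid (c * x)))) x := by
  refine ((hasDerivAt_sigmoid (c * x)).comp x ((hasDerivAt_id' x).const_mul c)).congr_deriv ?_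
  ring

theorem deriv_sigmoid_const_mul (c : ℝ) :
    deriv (fun y => sigmoid (c * y)) = fun x => c * (sigmoid (c * x) * (1 - sigmoid (c * x))) :=
  funext fun x => (hasDerivAt_sigmoid_const_mul c x).deriv

theorem deriv_deriv_sigmoid_const_mul (c x : ℝ) :
    deriv (deriv fun y => sigmoid (c * y)) x =
      c ^ 2 * (sigmoid (c * x) * (1 - sigmoid (c * x)) * (1 - 2 * sigmoid (c * x))) := by
  have hs := hasDerivAt_sigmoid_const_mul c x
  rw [deriv_sigmoid_const_mul]
  refine ((hs.mul (hs.const_sub 1)).const_mul c).deriv.trans ?_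
  ring

theorem strictAnti_sigmoid_const_mul {c : ℝ} (hc : c < 0) : StrictAnti fun x => sigmoid (c * x) :=
  sigmoid_strictMono.comp_strictAnti fun _ _ hxy => mul_lt_mul_of_neg_left hxy hc

theorem tendsto_sigmoid_const_mul_atBot {c : ℝ} (hc : c < 0) :
    Tendsto (fun x => sigmoid (c * x)) atBot (𝓝 1) :=
  tendsto_sigmoid_atTop.comp (tendsto_id.const_mul_atBot_of_neg hc)

theorem tendsto_sigmoid_const_mul_atTop {c : ℝ} (hc : c < 0) :
    Tendsto (fun x => sigmoid (c * x)) atTop (𝓝 0) :=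
  tendsto_sigmoid_atBot.comp (tendsto_id.const_mul_atTop_of_neg hc)

end Real

theorem one_div_one_add_exp_eq_sigmoid (lam : ℝ) :
    (fun x => 1 / (1 + exp (lam * x))) = fun x => sigmoid (-lam * x) := by
  funext x
  rw [sigmoid_def, one_div, neg_mul, neg_neg]

theorem sigmoid_neg_mul_solves_cubic_front (lam : ℝ) (hlam : lam ≠ 0) (x : ℝ) :
    deriv (deriv fun y => sigmoid (-lam * y)) x
      + (lam + 1 / lam) * deriv (fun y => sigmoid (-lam * y)) x
      + sigmoid (-lam * x) * (1 - sigmoid (-lam * x)) * (1 + 2 * lam ^ 2 * sigmoid (-lam * x))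
      = 0 := by
  rw [deriv_deriv_sigmoid_const_mul, deriv_sigmoid_const_mul]
  field_simp
  ring

/-- Explicit front for the cubic equation: with `lam = √(a/2)` and
`σ = lam + 1/lam = √(a/2) + √(2/a)`, the function `U x = 1 / (1 + exp (lam * x))`
is a `C²`, strictly decreasing front taking values in `(0,1)`, tending to `1`
at `-∞` and `0` at `+∞`, and solving `U'' + σ U' + U (1-U) (1+a U) = 0`. -/
theorem cubic_explicit_front (a lam σ : ℝ) (ha : 0 < a)
    (hlam : lam = Real.sqrt (a / 2))
    (hσ : σ = lam + 1 / lam)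
    (U : ℝ → ℝ) (hU : U = fun x => 1 / (1 + Real.exp (lam * x))) :
    ContDiff ℝ 2 U ∧
    StrictAnti U ∧
    (∀ x : ℝ, U x ∈ Set.Ioo (0 : ℝ) 1) ∧
    Tendsto U atBot (𝓝 1) ∧
    Tendsto U atTop (𝓝 0) ∧
    (∀ x : ℝ, deriv (deriv U) x + σ * deriv U x
      + U x * (1 - U x) * (1 + a * U x) = 0) := by
  have hlam_pos : 0 < lam := hlam ▸ sqrt_pos.mpr (half_pos ha)
  have ha_eq : a = 2 * lam ^ 2 := by
    rw [hlam, sq_sqrt (half_pos ha).le]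
    ring
  have hc : -lam < 0 := neg_neg_of_pos hlam_pos
  rw [one_div_one_add_exp_eq_sigmoid] at hU
  subst hU hσ ha_eq
  exact ⟨(contDiff_sigmoid.comp (contDiff_const.mul contDiff_id)).of_le le_top,
    strictAnti_sigmoid_const_mul hc, fun x => ⟨sigmoid_pos _, sigmoid_lt_one _⟩,
    tendsto_sigmoid_const_mul_atBot hc, tendsto_sigmoid_const_mul_atTop hc,
    sigmoid_neg_mul_solves_cubic_front lam hlam_pos.ne'⟩
end
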